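/- Let T be a standard filling of a partition diagram μ with inv(T) = 0 whose row reading word is a Yamanouchi word. Then the bottom row of T consists entirely of 1's, and the second row (from the bottom) consists of some number k ≥ 0 of 2's followed entirely by 1's. -/

import Mathlib

open scoped Classical

/-- Swap the values `a` and `b` in a word. -/
def swapVals (a b : ℕ) (w : List ℕ) : List ℕ :=
  w.map fun x => if x = a then b else if x = b then a else x

/-- Elementary dual equivalence `d_i`: acts as the identity if `i` lies (positionally)
between `i-1` and `i+1`, and otherwise swaps `i` with the outermost of `i-1`, `i+1`. -/
def delem (i : ℕ) (w : List ℕ) : List ℕ :=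
  let p := w.idxOf (i - 1)
  let q := w.idxOf i
  let r := w.idxOf (i + 1)
  if (p < q ∧ q < r) ∨ (r < q ∧ q < p) then w
  else if (q < p ∧ p < r) ∨ (r < p ∧ p < q) then swapVals i (i + 1) w
  else swapVals i (i - 1) w

/-- The cyclic replacement `a ↦ b ↦ c ↦ a` on the letters of a word. -/
def cycVals (a b c : ℕ) (w : List ℕ) : List ℕ :=
  w.map fun x => if x = a then b else if x = b then c else if x = c then a else x

/-- The map `d̃_i`: identity if `i` lies between `i-1` and `i+1`, otherwise it cyclically
permutes the values `i-1, i, i+1` as in Assaf's construction. -/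
def dtil (i : ℕ) (w : List ℕ) : List ℕ :=
  let p := w.idxOf (i - 1)
  let q := w.idxOf i
  let r := w.idxOf (i + 1)
  if (p < q ∧ q < r) ∨ (r < q ∧ q < p) then w
  else if q < p ∧ q < r then
    (if p < r then cycVals i (i - 1) (i + 1) w else cycVals i (i + 1) (i - 1) w)
  else
    (if p < r then cycVals (i - 1) i (i + 1) w else cycVals (i + 1) i (i - 1) w)

/-- The standardization of a word: rank letters by value, ties broken left to right. -/
def stWord (w : List ℕ) : List ℕ :=
  (w.zipIdx.map Prod.swap).map fun p =>
    1 + ((w.zipIdx.map Prod.swap).filter fun q => q.2 < p.2 ∨ (q.2 = p.2 ∧ q.1 < p.1)).length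

/-- Unstandardization of a permutation: the value `i` is replaced by
`1 +` the number of `j < i` such that `j+1` occurs before `j`. -/
def unstPerm (π : List ℕ) : List ℕ :=
  π.map fun i =>
    1 + ((List.range (i - 1)).filter fun j => π.idxOf (j + 2) < π.idxOf (j + 1)).length

/-- Unstandardization of a word. -/
def unstWord (w : List ℕ) : List ℕ := unstPerm (stWord w)

/-- RSK row insertion of a value into a tableau (rows listed bottom row first). -/
def insertTab : List (List ℕ) → ℕ → List (List ℕ)
  | [], x => [[x]]
  | r :: rs, x =>
    match r.findIdx? (fun y => x < y) with
    | none => (r ++ [x]) :: rs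
    | some j => r.set j x :: insertTab rs (r.getD j 0)

/-- The RSK insertion tableau of a word. -/
def Ptab (w : List ℕ) : List (List ℕ) := w.foldl insertTab []

def UtabAux : ℕ → List ℕ → List (List ℕ)
  | _, [] => []
  | s, a :: rest => ((List.range a).map (· + s + 1)) :: UtabAux (s + a) rest

/-- The superstandard tableau `U_λ`: `1,…,n` filled along the rows of `λ`, bottom row first. -/
def Utab (lam : List ℕ) : List (List ℕ) := (UtabAux 0 lam).filter (· ≠ [])

/-- `w` is a Yamanouchi word of content `lam`. -/
def IsYam (lam : List ℕ) (w : List ℕ) : Prop :=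
  (∀ x ∈ w, 1 ≤ x) ∧
  (∀ i : ℕ, w.count (i + 1) = lam.getD i 0) ∧
  ∀ t : List ℕ, t <:+ w → ∀ i : ℕ, t.count (i + 2) ≤ t.count (i + 1)

/-- `lam` is a partition: weakly decreasing with positive parts. -/
def IsPartition (lam : List ℕ) : Prop :=
  lam.Pairwise (· ≥ ·) ∧ ∀ a ∈ lam, 0 < a

/-- Row reading word of a tableau (rows listed bottom first; read top row first). -/
def rwTab (T : List (List ℕ)) : List ℕ := T.reverse.flatten

def fillAux : List ℕ → List ℕ → List (List ℕ)
  | [], _ => []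
  | a :: rest, w => w.take a :: fillAux rest (w.drop a)

/-- Fill a shape (row lengths, bottom row first) with a word read in row reading order. -/
def fillTab (sh : List ℕ) (w : List ℕ) : List (List ℕ) := (fillAux sh.reverse w).reverse

/-- `T` is a standard Young tableau of partition shape (rows listed bottom first). -/
def IsSYT (T : List (List ℕ)) : Prop :=
  (T.map List.length).Pairwise (· ≥ ·) ∧ (∀ r ∈ T, r ≠ []) ∧
  (rwTab T).Perm (List.range' 1 (rwTab T).length) ∧
  (∀ r ∈ T, r.Pairwise (· < ·)) ∧
  ∀ k, k + 1 < T.length → ∀ j < (T.getD (k + 1) []).length,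
    (T.getD k []).getD j 0 < (T.getD (k + 1) []).getD j 0

/-- An elementary dual equivalence move on tableaux, via the row reading word. -/
def DEMove (T T' : List (List ℕ)) : Prop :=
  ∃ i, 1 < i ∧ i < (rwTab T).length ∧
    T' = fillTab (T.map List.length) (delem i (rwTab T))

/-- Dual equivalence of tableaux: the equivalence relation generated by the moves `d_i`. -/
def DualEquiv : List (List ℕ) → List (List ℕ) → Prop := Relation.EqvGen DEMove

/-- Row reading order on cells `(x, y)` of `ℤ × ℤ` (top rows first, left to right). -/
def ReadingOrder (c d : ℤ × ℤ) : Prop := d.2 < c.2 ∨ (c.2 = d.2 ∧ c.1 < d.1)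

/-- A diagram, presented as its list of cells in row reading order. -/
def IsDiagramList (δ : List (ℤ × ℤ)) : Prop := δ.Pairwise ReadingOrder

def leRO (c d : ℤ × ℤ) : Prop := c = d ∨ ReadingOrder c d

/-- `e` lies in the pistol of the cell `c`: between `c` and the position one row below `c`. -/
def InPistol (c e : ℤ × ℤ) : Prop := leRO c e ∧ leRO e (c.1, c.2 - 1)

/-- A set of indices (into the row reading order of `δ`) lies in a common pistol of `δ`. -/
def Pistoled (δ : List (ℤ × ℤ)) (S : List ℕ) : Prop :=
  ∃ c ∈ δ, ∀ i ∈ S, i < δ.length ∧ InPistol c (δ.getD i (0, 0))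

/-- The involution `D_i^δ` of Assaf. -/
noncomputable def Ddelta (δ : List (ℤ × ℤ)) (i : ℕ) (π : List ℕ) : List ℕ :=
  if Pistoled δ [π.idxOf (i - 1), π.idxOf i, π.idxOf (i + 1)] then dtil i π
  else delem i π

/-- The cell at index `j` of the filling `T_δ(w)` is a descent. -/
def IsDescentAt (δ : List (ℤ × ℤ)) (w : List ℕ) (j : ℕ) : Prop :=
  j < δ.length ∧ ∃ k < δ.length,
    δ.getD k (0, 0) = ((δ.getD j (0, 0)).1, (δ.getD j (0, 0)).2 - 1) ∧
    w.getD k 0 < w.getD j 0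

/-- The set of descent cells of the filling `T_δ(w)`. -/
def DesSet (δ : List (ℤ × ℤ)) (w : List ℕ) : Set (ℤ × ℤ) :=
  {c | ∃ j, j < δ.length ∧ δ.getD j (0, 0) = c ∧ IsDescentAt δ w j}

/-- Number of cells of `δ` strictly above `c` in its column. -/
def legOf (δ : List (ℤ × ℤ)) (c : ℤ × ℤ) : ℕ :=
  (δ.filter fun e => e.1 = c.1 ∧ c.2 < e.2).length

/-- The major index statistic `maj_δ`. -/
noncomputable def majD (δ : List (ℤ × ℤ)) (w : List ℕ) : ℕ :=
  ∑ j ∈ Finset.range δ.length,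
    if IsDescentAt δ w j then 1 + legOf δ (δ.getD j (0, 0)) else 0

/-- Indices `j < k` form an inversion triple of `T_δ(w)` (with the cell below `j`). -/
def InvTripleAt (δ : List (ℤ × ℤ)) (w : List ℕ) (j k : ℕ) : Prop :=
  j < k ∧ k < δ.length ∧
  (δ.getD j (0, 0)).2 = (δ.getD k (0, 0)).2 ∧
  ∃ m < δ.length, δ.getD m (0, 0) = ((δ.getD j (0, 0)).1, (δ.getD j (0, 0)).2 - 1) ∧
    ((w.getD m 0 < w.getD k 0 ∧ w.getD k 0 < w.getD j 0) ∨
     (w.getD j 0 ≤ w.getD m 0 ∧ w.getD m 0 < w.getD k 0) ∨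
     (w.getD k 0 < w.getD j 0 ∧ w.getD j 0 ≤ w.getD m 0))

/-- Inversion pair where the cell below the left cell is missing. -/
def InvPairBelowAt (δ : List (ℤ × ℤ)) (w : List ℕ) (j k : ℕ) : Prop :=
  j < k ∧ k < δ.length ∧
  (δ.getD j (0, 0)).2 = (δ.getD k (0, 0)).2 ∧
  ((δ.getD j (0, 0)).1, (δ.getD j (0, 0)).2 - 1) ∉ δ ∧
  w.getD k 0 < w.getD j 0

/-- Inversion pair where the upper-left cell of the triple is missing. -/
def InvPairAboveAt (δ : List (ℤ × ℤ)) (w : List ℕ) (k m : ℕ) : Prop :=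
  k < δ.length ∧ m < δ.length ∧
  (δ.getD k (0, 0)).2 = (δ.getD m (0, 0)).2 + 1 ∧
  (δ.getD m (0, 0)).1 < (δ.getD k (0, 0)).1 ∧
  ((δ.getD m (0, 0)).1, (δ.getD m (0, 0)).2 + 1) ∉ δ ∧
  w.getD m 0 < w.getD k 0

/-- The inversion statistic `inv_δ(w)`: inversion triples plus inversion pairs. -/
noncomputable def invD (δ : List (ℤ × ℤ)) (w : List ℕ) : ℕ :=
  ((Finset.range δ.length ×ˢ Finset.range δ.length).filter fun p =>
      InvTripleAt δ w p.1 p.2).card +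
  ((Finset.range δ.length ×ˢ Finset.range δ.length).filter fun p =>
      InvPairBelowAt δ w p.1 p.2).card +
  ((Finset.range δ.length ×ˢ Finset.range δ.length).filter fun p =>
      InvPairAboveAt δ w p.1 p.2).card

/-- The cells of the (French) partition diagram of `lam`, in row reading order. -/
def partitionDiagram (lam : List ℕ) : List (ℤ × ℤ) :=
  ((List.range lam.length).reverse.map fun r =>
    (List.range (lam.getD r 0)).map fun x => ((x : ℤ), (r : ℤ))).flatten

/-- Index (in `w`) of the `j`-th from last occurrence of the value `v` (`j ≥ 1`). -/
def posFromLast (w : List ℕ) (v j : ℕ) : ℕ :=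
  (((List.range w.length).filter fun p => w.getD p 0 = v).reverse).getD (j - 1) 0

/-- A Yamanouchi word `w` jams the diagram `δ`. -/
def Jams (δ : List (ℤ × ℤ)) (w : List ℕ) : Prop :=
  ∃ i j : ℕ, 1 ≤ i ∧ 1 ≤ j ∧ j ≤ w.count i ∧ j + 1 ≤ w.count (i + 1) ∧
    Pistoled δ [posFromLast w i j, posFromLast w (i + 1) (j + 1)]

/-- `p` occurs as a strict pattern of `π` at the (increasing) index list `idx`. -/
def StrictPatternAt (p : List ℕ) (π : List ℕ) (idx : List ℕ) : Prop :=
  idx.Pairwise (· < ·) ∧ (∀ i ∈ idx, i < π.length) ∧ idx.length = p.length ∧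
  ∃ k : ℕ, ∀ j < p.length, π.getD (idx.getD j 0) 0 = p.getD j 0 + k

/-- `γ` is a realizable descent set of `δ`. -/
def RealizableIn (γ : Finset (ℤ × ℤ)) (δ : List (ℤ × ℤ)) : Prop :=
  (∀ c ∈ γ, ((c.1, c.2 - 1) : ℤ × ℤ) ∈ δ) ∧
  ∀ x₁ x₂ lo hi : ℤ, x₁ < x₂ → lo < hi →
    ((x₁, hi) : ℤ × ℤ) ∉ γ → ((x₁, lo) : ℤ × ℤ) ∉ γ →
    (∀ j, lo < j → j < hi → ((x₁, j) : ℤ × ℤ) ∈ γ) →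
    ¬ ∀ j, lo < j → j ≤ hi → ((x₂, j) : ℤ × ℤ) ∈ γ

/-- Value of the leading filling at a cell: `1` plus the length of the maximal run of
cells of `γ` weakly below `c` in its column, i.e. `1` off a non-`γ` cell, and one plus
the value below on cells of `γ`. -/
noncomputable def wval (γ : Finset (ℤ × ℤ)) (c : ℤ × ℤ) : ℕ :=
  1 + ((Finset.range γ.card).filter fun m =>
    ∀ l ≤ m, ((c.1, c.2 - (l : ℤ)) : ℤ × ℤ) ∈ γ).card

/-!
The last letter of a Yamanouchi word is `1`, and every letter `v + 2` is followed somewhere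
to its right by a letter `v + 1`. No cell of the bottom row has a cell below it, so
`inv = 0` forbids inversion pairs there: the bottom row weakly increases up to the last
letter and hence consists of `1`'s. Every cell of the second row then sits above a `1`, and
the absence of inversion triples says that an entry `≥ 2` of the second row is preceded in
its row only by entries in `[2, that entry]`. Hence an entry `v + 2 ≥ 3` of the second row
is followed only by `1`'s and by entries `≥ v + 2`, contradicting the Yamanouchi property;
so the second row consists of `1`'s and `2`'s, with the `2`'s forming an initial segment.
-/

theorem List.getD_zero_add_getD_one_le_sum (l : List ℕ) : l.getD 0 0 + l.getD 1 0 ≤ l.sum := by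
  match l with
  | [] => simp
  | [_] => simp
  | _ :: _ :: _ => simp [List.getD]

theorem IsPartition.getD_one_le_getD_zero {lam : List ℕ} (h : IsPartition lam) :
    lam.getD 1 0 ≤ lam.getD 0 0 := by
  match lam with
  | [] => simp
  | [_] => simp
  | _ :: b :: _ => simpa [List.getD] using (List.pairwise_cons.mp h.1).1 b (by simp)

theorem Nat.exists_forall_iff_lt_add_of_downClosed (lo b : ℕ) (P : ℕ → Prop)
    (hP : ∀ i j, lo ≤ i → i ≤ j → j < lo + b → P j → P i) :
    ∃ k ≤ b, ∀ j, lo ≤ j → j < lo + b → (P j ↔ j < lo + k) := by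
  have hex : ∃ k, k = b ∨ (k < b ∧ ¬ P (lo + k)) := ⟨b, .inl rfl⟩
  refine ⟨Nat.find hex, Nat.find_min' hex (.inl rfl),
    fun j hj1 hj2 => ⟨fun hPj => ?_, fun hj => ?_⟩⟩
  · by_contra! hle
    rcases Nat.find_spec hex with hb | ⟨-, hnP⟩
    · omega
    · exact hnP (hP _ j (by omega) (by omega) hj2 hPj)
  · have := Nat.find_min hex (show j - lo < Nat.find hex by omega)
    simp only [not_or, not_and, not_not, Nat.add_sub_cancel' hj1] at this
    exact this.2 (by omega)

section Yamanouchi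

variable {μ w : List ℕ}

theorem IsYam.one_le_getD (h : IsYam μ w) {j : ℕ} (hj : j < w.length) : 1 ≤ w.getD j 0 := by
  rw [List.getD_eq_getElem _ _ hj]
  exact h.1 _ (List.getElem_mem hj)

theorem IsYam.exists_lt_getD_eq_of_getD_eq_add_two (h : IsYam μ w) {j v : ℕ}
    (hj : j < w.length) (hv : w.getD j 0 = v + 2) :
    ∃ t, j < t ∧ t < w.length ∧ w.getD t 0 = v + 1 := by
  have hcount := h.2.2 (w.drop j) (List.drop_suffix j w) v
  have hmem : v + 2 ∈ w.drop j := by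
    rw [List.getD_eq_getElem _ _ hj] at hv
    exact List.mem_iff_getElem.mpr ⟨0, by simp; omega, by simp [hv]⟩
  obtain ⟨i, hi, hwi⟩ := List.getElem_of_mem
    (List.count_pos_iff.mp (lt_of_lt_of_le (List.count_pos_iff.mpr hmem) hcount))
  rw [List.getElem_drop] at hwi
  rw [List.length_drop] at hi
  have hi0 : i ≠ 0 := by
    rintro rfl
    rw [List.getD_eq_getElem _ _ hj] at hv
    simp only [Nat.add_zero, hv] at hwi
    omega
  exact ⟨j + i, by omega, by omega, by rwa [List.getD_eq_getElem _ _ (by omega)]⟩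

theorem IsYam.getD_length_sub_one (h : IsYam μ w) (hw : w ≠ []) :
    w.getD (w.length - 1) 0 = 1 := by
  have hlt : w.length - 1 < w.length := by
    have := List.length_pos_iff.mpr hw
    omega
  by_contra hne
  obtain ⟨t, ht, ht', -⟩ := h.exists_lt_getD_eq_of_getD_eq_add_two hlt
    (v := w.getD (w.length - 1) 0 - 2) (by have := h.one_le_getD hlt; omega)
  omega

end Yamanouchi

/-- The definition elaborates `x` as an integer, lifting `List.range _` to `List ℤ` through a
`flatMap`; this is the same diagram with `x : ℕ`. -/
theorem partitionDiagram_eq (lam : List ℕ) : partitionDiagram lam =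
    ((List.range lam.length).reverse.map fun r =>
      (List.range (lam.getD r 0)).map fun x : ℕ => ((x : ℤ), (r : ℤ))).flatten := by
  have h (l : List ℕ) : (l.flatMap fun a : ℕ => [(a : ℤ)]) = l.map (↑) :=
    List.flatMap_pure_eq_map _ l
  simp [partitionDiagram, h, Function.comp_def]

theorem partitionDiagram_cons (a : ℕ) (l : List ℕ) :
    partitionDiagram (a :: l) = (partitionDiagram l).map (fun c => (c.1, c.2 + 1)) ++
      (List.range a).map fun x : ℕ => ((x : ℤ), (0 : ℤ)) := by
  simp [partitionDiagram_eq, List.range_succ_eq_map, List.map_flatten, List.map_reverse,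
    Function.comp_def]

theorem length_partitionDiagram (lam : List ℕ) : (partitionDiagram lam).length = lam.sum := by
  induction lam with
  | nil => rfl
  | cons a l ih => simp [partitionDiagram_cons, ih, Nat.add_comm]

theorem snd_nonneg_of_mem_partitionDiagram {lam : List ℕ} {c : ℤ × ℤ}
    (hc : c ∈ partitionDiagram lam) : 0 ≤ c.2 := by
  induction lam generalizing c with
  | nil => simp [partitionDiagram] at hc
  | cons a l ih =>
    rw [partitionDiagram_cons] at hc
    rcases List.mem_append.mp hc with hc | hc
    · obtain ⟨d, hd, rfl⟩ := List.mem_map.mp hc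
      have := ih hd
      dsimp only
      omega
    · obtain ⟨x, -, rfl⟩ := List.mem_map.mp hc
      rfl

theorem getD_partitionDiagram_cons_of_lt (a : ℕ) (l : List ℕ) {m : ℕ} (hm : m < l.sum) :
    (partitionDiagram (a :: l)).getD m (0, 0) =
      (((partitionDiagram l).getD m (0, 0)).1, ((partitionDiagram l).getD m (0, 0)).2 + 1) := by
  have hm' : m < (partitionDiagram l).length := by rwa [length_partitionDiagram]
  rw [partitionDiagram_cons, List.getD_append _ _ _ _ (by simpa using hm'),
    List.getD_eq_getElem _ _ (by simpa using hm'), List.getD_eq_getElem _ _ hm', List.getElem_map]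

theorem getD_partitionDiagram_cons_of_le (a : ℕ) (l : List ℕ) {m : ℕ} (h1 : l.sum ≤ m)
    (h2 : m < l.sum + a) :
    (partitionDiagram (a :: l)).getD m (0, 0) = (((m - l.sum : ℕ) : ℤ), 0) := by
  rw [partitionDiagram_cons, List.getD_append_right _ _ _ _ (by simpa [length_partitionDiagram]),
    List.getD_eq_getElem _ _ (by simp [length_partitionDiagram]; omega)]
  simp [length_partitionDiagram]

theorem getD_partitionDiagram_of_bottomRow {lam : List ℕ} {m : ℕ}
    (h1 : lam.sum - lam.getD 0 0 ≤ m) (h2 : m < lam.sum) :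
    (partitionDiagram lam).getD m (0, 0) = (((m - (lam.sum - lam.getD 0 0) : ℕ) : ℤ), 0) := by
  match lam with
  | [] => simp at h2
  | a :: l =>
    simp only [List.sum_cons, List.getD_cons_zero, Nat.add_sub_cancel_left] at h1 h2 ⊢
    exact getD_partitionDiagram_cons_of_le a l h1 (by omega)

theorem getD_partitionDiagram_of_secondRow {lam : List ℕ} {m : ℕ}
    (h1 : lam.sum - lam.getD 0 0 - lam.getD 1 0 ≤ m) (h2 : m < lam.sum - lam.getD 0 0) :
    (partitionDiagram lam).getD m (0, 0) =
      (((m - (lam.sum - lam.getD 0 0 - lam.getD 1 0) : ℕ) : ℤ), 1) := by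
  match lam with
  | [] => simp at h2
  | a :: l =>
    simp only [List.sum_cons, List.getD_cons_zero, List.getD_cons_succ,
      Nat.add_sub_cancel_left] at h1 h2 ⊢
    rw [getD_partitionDiagram_cons_of_lt a l h2,
      getD_partitionDiagram_of_bottomRow (by simpa using h1) h2]
    simp


section Inversions

variable {δ : List (ℤ × ℤ)} {w : List ℕ}

theorem not_invTripleAt_of_invD_eq_zero (h : invD δ w = 0) (j k : ℕ) :
    ¬ InvTripleAt δ w j k := by
  intro hjk
  have hmem : (j, k) ∈ (Finset.range δ.length ×ˢ Finset.range δ.length).filter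
      fun p => InvTripleAt δ w p.1 p.2 := by
    simpa [hjk] using ⟨hjk.1.trans hjk.2.1, hjk.2.1⟩
  have := Finset.card_pos.mpr ⟨_, hmem⟩
  unfold invD at h
  omega

theorem not_invPairBelowAt_of_invD_eq_zero (h : invD δ w = 0) (j k : ℕ) :
    ¬ InvPairBelowAt δ w j k := by
  intro hjk
  have hmem : (j, k) ∈ (Finset.range δ.length ×ˢ Finset.range δ.length).filter
      fun p => InvPairBelowAt δ w p.1 p.2 := by
    simpa [hjk] using ⟨hjk.1.trans hjk.2.1, hjk.2.1⟩
  have := Finset.card_pos.mpr ⟨_, hmem⟩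
  unfold invD at h
  omega

end Inversions

section Rows

variable {lam w : List ℕ}

theorem getD_le_getD_of_bottomRow (hinv : invD (partitionDiagram lam) w = 0) {j k : ℕ}
    (hj : lam.sum - lam.getD 0 0 ≤ j) (hjk : j ≤ k) (hk : k < lam.sum) :
    w.getD j 0 ≤ w.getD k 0 := by
  rcases hjk.eq_or_lt with rfl | hjk
  · rfl
  by_contra! hlt
  refine not_invPairBelowAt_of_invD_eq_zero hinv j k
    ⟨hjk, by rwa [length_partitionDiagram], ?_, fun hmem => ?_, hlt⟩
  · rw [getD_partitionDiagram_of_bottomRow hj (by omega),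
      getD_partitionDiagram_of_bottomRow (by omega) hk]
  · rw [getD_partitionDiagram_of_bottomRow hj (by omega)] at hmem
    simpa using snd_nonneg_of_mem_partitionDiagram hmem

theorem getD_le_getD_of_secondRow (hba : lam.getD 1 0 ≤ lam.getD 0 0)
    (hinv : invD (partitionDiagram lam) w = 0)
    (hone : ∀ m, lam.sum - lam.getD 0 0 ≤ m → m < lam.sum → w.getD m 0 = 1) {j k : ℕ}
    (hj : lam.sum - lam.getD 0 0 - lam.getD 1 0 ≤ j) (hjk : j < k)
    (hk : k < lam.sum - lam.getD 0 0) (h2 : 2 ≤ w.getD k 0) :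
    2 ≤ w.getD j 0 ∧ w.getD j 0 ≤ w.getD k 0 := by
  have hab := lam.getD_zero_add_getD_one_le_sum
  -- the index of the cell directly below `j`
  set m := lam.sum - lam.getD 0 0 + (j - (lam.sum - lam.getD 0 0 - lam.getD 1 0))
  have hm1 : lam.sum - lam.getD 0 0 ≤ m := by omega
  have hm2 : m < lam.sum := by omega
  by_contra hcon
  refine not_invTripleAt_of_invD_eq_zero hinv j k
    ⟨hjk, by rw [length_partitionDiagram]; omega, ?_,
      m, by rwa [length_partitionDiagram], ?_, ?_⟩
  · rw [getD_partitionDiagram_of_secondRow hj (by omega),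
      getD_partitionDiagram_of_secondRow (by omega) hk]
  · rw [getD_partitionDiagram_of_bottomRow hm1 hm2,
      getD_partitionDiagram_of_secondRow hj (by omega)]
    simp [m]
  · rw [hone m hm1 hm2]
    omega

variable {μ : List ℕ}

theorem IsYam.getD_eq_one_of_bottomRow (hyam : IsYam μ w) (hlen : w.length = lam.sum)
    (hinv : invD (partitionDiagram lam) w = 0) {j : ℕ}
    (h1 : lam.sum - lam.getD 0 0 ≤ j) (h2 : j < lam.sum) : w.getD j 0 = 1 := by
  have hlast := hyam.getD_length_sub_one (List.ne_nil_of_length_pos (by omega))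
  rw [hlen] at hlast
  exact le_antisymm (hlast ▸ getD_le_getD_of_bottomRow hinv h1 (by omega) (by omega))
    (hyam.one_le_getD (by omega))

theorem IsYam.getD_le_two_of_secondRow (hyam : IsYam μ w) (hlen : w.length = lam.sum)
    (hba : lam.getD 1 0 ≤ lam.getD 0 0) (hinv : invD (partitionDiagram lam) w = 0) {j : ℕ}
    (h1 : lam.sum - lam.getD 0 0 - lam.getD 1 0 ≤ j) (h2 : j < lam.sum - lam.getD 0 0) :
    w.getD j 0 ≤ 2 := by
  have hone := fun m => hyam.getD_eq_one_of_bottomRow (lam := lam) hlen hinv (j := m)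
  by_contra! hgt
  obtain ⟨t, hjt, htlen, ht⟩ := hyam.exists_lt_getD_eq_of_getD_eq_add_two (j := j)
    (v := w.getD j 0 - 2) (by omega) (by omega)
  rcases lt_or_ge t (lam.sum - lam.getD 0 0) with ht2 | ht2
  · have := getD_le_getD_of_secondRow hba hinv hone h1 hjt ht2 (by omega)
    omega
  · have := hone t ht2 (by omega)
    omega

end Rows

theorem bottom_rows_structure (lam : List ℕ) (hlam : IsPartition lam)
    (w : List ℕ) (hlen : w.length = lam.sum)
    (hyam : ∃ lam' : List ℕ, IsPartition lam' ∧ IsYam lam' w)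
    (hinv : invD (partitionDiagram lam) w = 0) :
    (∀ j, lam.sum - lam.getD 0 0 ≤ j → j < lam.sum → w.getD j 0 = 1) ∧
    ∃ k, k ≤ lam.getD 1 0 ∧
      ∀ j, lam.sum - lam.getD 0 0 - lam.getD 1 0 ≤ j → j < lam.sum - lam.getD 0 0 →
        w.getD j 0 =
          if j < lam.sum - lam.getD 0 0 - lam.getD 1 0 + k then 2 else 1 := by
  obtain ⟨μ, -, hyam⟩ := hyam
  have hab := lam.getD_zero_add_getD_one_le_sum
  have hba := hlam.getD_one_le_getD_zero
  have hone := fun j => hyam.getD_eq_one_of_bottomRow (lam := lam) hlen hinv (j := j)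
  have hle2 := fun j => hyam.getD_le_two_of_secondRow hlen hba hinv (j := j)
  refine ⟨hone, ?_⟩
  obtain ⟨k, hkb, hk⟩ := Nat.exists_forall_iff_lt_add_of_downClosed
    (lam.sum - lam.getD 0 0 - lam.getD 1 0) (lam.getD 1 0) (fun j => w.getD j 0 = 2)
    (by
      intro i j hi hij hj hj2
      rcases hij.eq_or_lt with rfl | hij
      · exact hj2
      have := getD_le_getD_of_secondRow hba hinv hone hi hij (by omega) hj2.ge
      have := hle2 i hi (by omega)
      omega)
  refine ⟨k, hkb, fun j h1 h2 => ?_⟩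
  have := hyam.one_le_getD (j := j) (by omega)
  have := hle2 j h1 h2
  have := hk j h1 (by omega)
  split_ifs <;> omega
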